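/- The map R^ε_{α,β} of the multiparametric NLS lift (u₁ = (α₂/β₂)y₁ − ε²(α₁β₂−α₂β₁)x₁/[β₂(α₂β₂+ε²x₁y₂)], u₂ = y₂, v₁ = x₁, v₂ = (β₂/α₂)x₂ + ε²(α₁β₂−α₂β₁)y₂/[α₂(α₂β₂+ε²x₁y₂)]) is a Poisson map with respect to the bracket {x₁,x₂} = α₂, {y₁,y₂} = β₂, {xᵢ,yⱼ} = 0: one has {u₁,u₂} = α₂, {v₁,v₂} = β₂, and {uᵢ,vⱼ} = 0 for i,j ∈ {1,2}. -/

import Mathlib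

noncomputable def d1 (f : ℂ → ℂ → ℂ → ℂ → ℂ) (a b c d : ℂ) : ℂ :=
  deriv (fun t => f t b c d) a
noncomputable def d2 (f : ℂ → ℂ → ℂ → ℂ → ℂ) (a b c d : ℂ) : ℂ :=
  deriv (fun t => f a t c d) b
noncomputable def d3 (f : ℂ → ℂ → ℂ → ℂ → ℂ) (a b c d : ℂ) : ℂ :=
  deriv (fun t => f a b t d) c
noncomputable def d4 (f : ℂ → ℂ → ℂ → ℂ → ℂ) (a b c d : ℂ) : ℂ :=
  deriv (fun t => f a b c t) d

/-- Poisson bracket on ℂ⁴ (coords x₁,x₂,y₁,y₂) with `{x₁,x₂} = α₂`,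
`{y₁,y₂} = β₂`, `{xᵢ,yⱼ} = 0`. -/
noncomputable def pb (α₂ β₂ : ℂ) (f g : ℂ → ℂ → ℂ → ℂ → ℂ) (a b c d : ℂ) : ℂ :=
  α₂ * (d1 f a b c d * d2 g a b c d - d2 f a b c d * d1 g a b c d) +
  β₂ * (d3 f a b c d * d4 g a b c d - d4 f a b c d * d3 g a b c d)

/-!
Since `u₂ = y₂` and `v₁ = x₁` are coordinates, bracketing with them just differentiates
the other entry, which disposes of five of the six brackets. The remaining one reduces to
`{u₁, v₂} = β₂ ∂u₁/∂x₁ + α₂ ∂v₂/∂y₂`, and it vanishes because, with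
`D = α₂β₂ + ε²x₁y₂`, both `x₁ / D` and `y₂ / D` have derivative `α₂β₂ / D²` in their own
variable.
-/

theorem hasDerivAt_div_add_mul {𝕜 : Type*} [NontriviallyNormedField 𝕜] {c m t : 𝕜}
    (h : c + m * t ≠ 0) :
    HasDerivAt (fun s => s / (c + m * s)) (c / (c + m * t) ^ 2) t := by
  have hden := ((hasDerivAt_id' t).const_mul m).const_add c
  exact ((hasDerivAt_id' t).div hden h).congr_deriv (by ring)

section Coordinates

variable (α β : ℂ) (f g : ℂ → ℂ → ℂ → ℂ → ℂ) (a b c d : ℂ)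

theorem pb_x₁_left : pb α β (fun x₁ _ _ _ => x₁) g a b c d = α * d2 g a b c d := by
  simp [pb, d1, d2, d3, d4]

theorem pb_x₁_right : pb α β f (fun x₁ _ _ _ => x₁) a b c d = -(α * d2 f a b c d) := by
  simp [pb, d1, d2, d3, d4]

theorem pb_y₂_left : pb α β (fun _ _ _ y₂ => y₂) g a b c d = -(β * d3 g a b c d) := by
  simp [pb, d1, d2, d3, d4]

theorem pb_y₂_right : pb α β f (fun _ _ _ y₂ => y₂) a b c d = β * d3 f a b c d := by
  simp [pb, d1, d2, d3, d4]

end Coordinates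

namespace NLSLift

variable (ε α₁ α₂ β₁ β₂ : ℂ)

noncomputable def u₁ : ℂ → ℂ → ℂ → ℂ → ℂ := fun x₁ _ y₁ y₂ => (α₂ / β₂) * y₁ -
  ε ^ 2 * (α₁ * β₂ - α₂ * β₁) * x₁ / (β₂ * (α₂ * β₂ + ε ^ 2 * x₁ * y₂))

noncomputable def v₂ : ℂ → ℂ → ℂ → ℂ → ℂ := fun x₁ x₂ _ y₂ => (β₂ / α₂) * x₂ +
  ε ^ 2 * (α₁ * β₂ - α₂ * β₁) * y₂ / (α₂ * (α₂ * β₂ + ε ^ 2 * x₁ * y₂))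

variable {ε α₁ α₂ β₁ β₂} {x₁ x₂ y₁ y₂ : ℂ}

theorem d1_u₁ (hD : α₂ * β₂ + ε ^ 2 * x₁ * y₂ ≠ 0) :
    d1 (u₁ ε α₁ α₂ β₁ β₂) x₁ x₂ y₁ y₂ =
      -(ε ^ 2 * (α₁ * β₂ - α₂ * β₁) / β₂) * (α₂ * β₂ / (α₂ * β₂ + ε ^ 2 * x₁ * y₂) ^ 2) := by
  have hD' : α₂ * β₂ + ε ^ 2 * y₂ * x₁ ≠ 0 := by rwa [mul_right_comm]
  have hu₁ : (fun t => u₁ ε α₁ α₂ β₁ β₂ t x₂ y₁ y₂) = fun t => α₂ / β₂ * y₁ -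
      ε ^ 2 * (α₁ * β₂ - α₂ * β₁) / β₂ * (t / (α₂ * β₂ + ε ^ 2 * y₂ * t)) := by
    funext t; rw [u₁, mul_div_mul_comm, mul_right_comm _ t]
  rw [d1, hu₁]
  exact ((hasDerivAt_const x₁ _).sub ((hasDerivAt_div_add_mul hD').const_mul _)).deriv.trans
    (by ring)

theorem d2_u₁ : d2 (u₁ ε α₁ α₂ β₁ β₂) x₁ x₂ y₁ y₂ = 0 := by
  simp [d2, u₁]

theorem d3_u₁ : d3 (u₁ ε α₁ α₂ β₁ β₂) x₁ x₂ y₁ y₂ = α₂ / β₂ := by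
  simp [d3, u₁]

theorem d2_v₂ : d2 (v₂ ε α₁ α₂ β₁ β₂) x₁ x₂ y₁ y₂ = β₂ / α₂ := by
  simp [d2, v₂]

theorem d3_v₂ : d3 (v₂ ε α₁ α₂ β₁ β₂) x₁ x₂ y₁ y₂ = 0 := by
  simp [d3, v₂]

theorem d4_v₂ (hD : α₂ * β₂ + ε ^ 2 * x₁ * y₂ ≠ 0) :
    d4 (v₂ ε α₁ α₂ β₁ β₂) x₁ x₂ y₁ y₂ =
      ε ^ 2 * (α₁ * β₂ - α₂ * β₁) / α₂ * (α₂ * β₂ / (α₂ * β₂ + ε ^ 2 * x₁ * y₂) ^ 2) := by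
  have hv₂ : (fun t => v₂ ε α₁ α₂ β₁ β₂ x₁ x₂ y₁ t) = fun t => β₂ / α₂ * x₂ +
      ε ^ 2 * (α₁ * β₂ - α₂ * β₁) / α₂ * (t / (α₂ * β₂ + ε ^ 2 * x₁ * t)) := by
    funext t; rw [v₂, mul_div_mul_comm]
  rw [d4, hv₂]
  exact ((hasDerivAt_const y₂ _).add ((hasDerivAt_div_add_mul hD).const_mul _)).deriv.trans
    (zero_add _)

theorem pb_u₁_v₂ (hα₂ : α₂ ≠ 0) (hβ₂ : β₂ ≠ 0) (hD : α₂ * β₂ + ε ^ 2 * x₁ * y₂ ≠ 0) :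
    pb α₂ β₂ (u₁ ε α₁ α₂ β₁ β₂) (v₂ ε α₁ α₂ β₁ β₂) x₁ x₂ y₁ y₂ = 0 := by
  rw [pb, d1_u₁ hD, d2_u₁, d3_u₁, d2_v₂, d3_v₂, d4_v₂ hD]
  field_simp
  ring

end NLSLift

theorem NLS_lift_Poisson_general (ε α₁ α₂ β₁ β₂ : ℂ)
    (hα₂ : α₂ ≠ 0) (hβ₂ : β₂ ≠ 0)
    (u₁ u₂ v₁ v₂ : ℂ → ℂ → ℂ → ℂ → ℂ)
    (hu₁ : u₁ = fun x₁ _ y₁ y₂ => (α₂ / β₂) * y₁ -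
      ε ^ 2 * (α₁ * β₂ - α₂ * β₁) * x₁ / (β₂ * (α₂ * β₂ + ε ^ 2 * x₁ * y₂)))
    (hu₂ : u₂ = fun _ _ _ y₂ => y₂)
    (hv₁ : v₁ = fun x₁ _ _ _ => x₁)
    (hv₂ : v₂ = fun x₁ x₂ _ y₂ => (β₂ / α₂) * x₂ +
      ε ^ 2 * (α₁ * β₂ - α₂ * β₁) * y₂ / (α₂ * (α₂ * β₂ + ε ^ 2 * x₁ * y₂)))
    (x₁ x₂ y₁ y₂ : ℂ) (hD : α₂ * β₂ + ε ^ 2 * x₁ * y₂ ≠ 0) :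
    pb α₂ β₂ u₁ u₂ x₁ x₂ y₁ y₂ = α₂ ∧
    pb α₂ β₂ v₁ v₂ x₁ x₂ y₁ y₂ = β₂ ∧
    pb α₂ β₂ u₁ v₁ x₁ x₂ y₁ y₂ = 0 ∧
    pb α₂ β₂ u₁ v₂ x₁ x₂ y₁ y₂ = 0 ∧
    pb α₂ β₂ u₂ v₁ x₁ x₂ y₁ y₂ = 0 ∧
    pb α₂ β₂ u₂ v₂ x₁ x₂ y₁ y₂ = 0 := by
  obtain rfl : u₁ = NLSLift.u₁ ε α₁ α₂ β₁ β₂ := hu₁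
  obtain rfl : v₂ = NLSLift.v₂ ε α₁ α₂ β₁ β₂ := hv₂
  subst hu₂ hv₁
  refine ⟨?_, ?_, ?_, NLSLift.pb_u₁_v₂ hα₂ hβ₂ hD, ?_, ?_⟩
  · rw [pb_y₂_right, NLSLift.d3_u₁, mul_div_cancel₀ _ hβ₂]
  · rw [pb_x₁_left, NLSLift.d2_v₂, mul_div_cancel₀ _ hα₂]
  · rw [pb_x₁_right, NLSLift.d2_u₁, mul_zero, neg_zero]
  · simp [pb_x₁_right, d2]
  · rw [pb_y₂_left, NLSLift.d3_v₂, mul_zero, neg_zero]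

/-- The multiparametric NLS lift `R^ε_{α,β}` is a Poisson map for the bracket
`{x₁,x₂} = α₂`, `{y₁,y₂} = β₂`, `{xᵢ,yⱼ} = 0`. -/
theorem NLS_lift_Poisson (ε α₁ α₂ β₁ β₂ : ℂ)
    (hε : ε ≠ 0) (hα₂ : α₂ ≠ 0) (hβ₂ : β₂ ≠ 0)
    (u₁ u₂ v₁ v₂ : ℂ → ℂ → ℂ → ℂ → ℂ)
    (hu₁ : u₁ = fun x₁ _ y₁ y₂ => (α₂ / β₂) * y₁ -
      ε ^ 2 * (α₁ * β₂ - α₂ * β₁) * x₁ / (β₂ * (α₂ * β₂ + ε ^ 2 * x₁ * y₂)))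
    (hu₂ : u₂ = fun _ _ _ y₂ => y₂)
    (hv₁ : v₁ = fun x₁ _ _ _ => x₁)
    (hv₂ : v₂ = fun x₁ x₂ _ y₂ => (β₂ / α₂) * x₂ +
      ε ^ 2 * (α₁ * β₂ - α₂ * β₁) * y₂ / (α₂ * (α₂ * β₂ + ε ^ 2 * x₁ * y₂)))
    (x₁ x₂ y₁ y₂ : ℂ) (hD : α₂ * β₂ + ε ^ 2 * x₁ * y₂ ≠ 0) :
    pb α₂ β₂ u₁ u₂ x₁ x₂ y₁ y₂ = α₂ ∧
    pb α₂ β₂ v₁ v₂ x₁ x₂ y₁ y₂ = β₂ ∧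
    pb α₂ β₂ u₁ v₁ x₁ x₂ y₁ y₂ = 0 ∧
    pb α₂ β₂ u₁ v₂ x₁ x₂ y₁ y₂ = 0 ∧
    pb α₂ β₂ u₂ v₁ x₁ x₂ y₁ y₂ = 0 ∧
    pb α₂ β₂ u₂ v₂ x₁ x₂ y₁ y₂ = 0 :=
  NLS_lift_Poisson_general ε α₁ α₂ β₁ β₂ hα₂ hβ₂ u₁ u₂ v₁ v₂ hu₁ hu₂ hv₁ hv₂ x₁ x₂ y₁ y₂ hD
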